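/- For each j ∈ {1, …, ℓ}, the set L̂_j = {(b | g; f₁, …, f_ℓ) in the multiple almost-Riordan group : f_j = t} is a subgroup of the multiple almost-Riordan group. -/

import Mathlib

/-!
Composition with a series `h ∈ t·K[[t^ℓ]]` preserves the class of series supported in degrees
`≡ r (mod ℓ)`, for every residue `r`; hence all components of a product, and of the candidate
inverse, stay in `K[[t^ℓ]]` resp. `t·K[[t^ℓ]]`. The compositional inverse of the root `h` is in
`t·K[[t^ℓ]]` because its coefficient recursion only composes with such series. Once `pcomp` is
identified with `PowerSeries.subst`, composition is an associative algebra homomorphism and the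
group laws become ring identities, the root law coming from `∏ᵢ fᵢ/t = (h/t)^ℓ`. A multiplier
`f_j = t` is preserved since `(t/h)·h = t` and `h ∘ h⁻¹ = t`.
-/

open PowerSeries

/-- Composition `g ∘ f` of formal power series (meaningful when `f` has zero
constant term). -/
noncomputable def pcomp {K : Type*} [Field K] (g f : PowerSeries K) : PowerSeries K :=
  PowerSeries.mk fun n => ∑ k ∈ Finset.range (n + 1), coeff k g * coeff n (f ^ k)

/-- `f/t`: the coefficient shift of a power series. -/
noncomputable def pdivX {K : Type*} [Field K] (f : PowerSeries K) : PowerSeries K :=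
  PowerSeries.mk fun n => coeff (n + 1) f

/-- `g ∈ K[[t^ℓ]]`. -/
def InTl {K : Type*} [Field K] (ℓ : ℕ) (g : PowerSeries K) : Prop :=
  ∀ n : ℕ, ¬ ℓ ∣ n → coeff n g = 0

/-- A normalized multiplier function: `f ∈ t·K[[t^ℓ]]` with `f'(0) = 1`. -/
def IsMultN {K : Type*} [Field K] (ℓ : ℕ) (f : PowerSeries K) : Prop :=
  constantCoeff f = 0 ∧ (∀ n : ℕ, n % ℓ ≠ 1 % ℓ → coeff n f = 0) ∧ coeff 1 f = 1

/-- The underlying data of a multiple almost-Riordan array `(b | g; f₁,…,f_ℓ, h)`. -/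
abbrev MaR (K : Type*) [Field K] (m : ℕ) :=
  PowerSeries K × PowerSeries K × (Fin (m + 1) → PowerSeries K) × PowerSeries K

/-- A normalized multiple almost-Riordan array `(b | g; f₁, …, f_ℓ)` together
with its chosen normalized `ℓ`-th root `h` of `f₁⋯f_ℓ` (`ℓ = m + 1`). -/
def IsMaRN {K : Type*} [Field K] (m : ℕ) (p : MaR K m) : Prop :=
  InTl (m + 1) p.1 ∧ constantCoeff p.1 = 1 ∧
    InTl (m + 1) p.2.1 ∧ constantCoeff p.2.1 = 1 ∧
    (∀ j, IsMultN (m + 1) (p.2.2.1 j)) ∧ IsMultN (m + 1) p.2.2.2 ∧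
    p.2.2.2 ^ (m + 1) = ∏ j, p.2.2.1 j

/-- The multiple almost-Riordan product. -/
noncomputable def maMul {K : Type*} [Field K] {m : ℕ} (p q : MaR K m) : MaR K m :=
  (C (constantCoeff q.1) * p.1 +
      p.2.1 * (pdivX (p.2.2.1 (Fin.last m)))⁻¹ *
        (pcomp q.1 p.2.2.2 - C (constantCoeff q.1)),
    p.2.1 * pcomp q.2.1 p.2.2.2,
    fun j => pdivX (p.2.2.1 j) * (pdivX p.2.2.2)⁻¹ * pcomp (q.2.2.1 j) p.2.2.2,
    pcomp q.2.2.2 p.2.2.2)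

namespace PowerSeries

variable {K : Type*} [Field K]

theorem coeff_pow_of_lt {f : K⟦X⟧} (hf : constantCoeff f = 0) {n k : ℕ} (h : n < k) :
    coeff n (f ^ k) = 0 :=
  X_pow_dvd_iff.mp (pow_dvd_pow_of_dvd (X_dvd_iff.mpr hf) k) n h

theorem pcomp_eq_subst {g f : K⟦X⟧} (hf : constantCoeff f = 0) : pcomp g f = g.subst f := by
  ext n
  rw [coeff_subst' (HasSubst.of_constantCoeff_zero' hf),
    finsum_eq_sum_of_support_subset (s := Finset.range (n + 1))]
  · simp [pcomp]
  · intro k hk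
    by_contra hkn
    rw [Finset.coe_range, Set.mem_Iio, not_lt] at hkn
    exact hk (by simp only [coeff_pow_of_lt hf (show n < k by omega), smul_zero])

section subst

variable {f : K⟦X⟧} (hf : constantCoeff f = 0)
include hf

theorem constantCoeff_subst_of_constantCoeff_eq_zero (g : K⟦X⟧) :
    constantCoeff (g.subst f) = constantCoeff g := by
  rw [← pcomp_eq_subst hf, ← coeff_zero_eq_constantCoeff_apply, pcomp, coeff_mk]
  simp

theorem coeff_one_subst_of_constantCoeff_eq_zero (g : K⟦X⟧) :
    coeff 1 (g.subst f) = coeff 1 g * coeff 1 f := by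
  rw [← pcomp_eq_subst hf, pcomp, coeff_mk, Finset.sum_range_succ, Finset.sum_range_one]
  simp [coeff_one]

theorem subst_one_of_constantCoeff_eq_zero : (1 : K⟦X⟧).subst f = 1 := by
  rw [← coe_substAlgHom (HasSubst.of_constantCoeff_zero' hf), map_one]

theorem subst_prod_of_constantCoeff_eq_zero {ι : Type*} (s : Finset ι) (F : ι → K⟦X⟧) :
    (∏ i ∈ s, F i).subst f = ∏ i ∈ s, (F i).subst f := by
  rw [← coe_substAlgHom (HasSubst.of_constantCoeff_zero' hf), map_prod]

end subst

theorem subst_subst_of_subst_eq_X {r h : K⟦X⟧} (hr : constantCoeff r = 0)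
    (hh : constantCoeff h = 0) (hrh : r.subst h = X) (a : K⟦X⟧) :
    PowerSeries.subst h (a.subst r) = a := by
  rw [subst_comp_subst_apply (HasSubst.of_constantCoeff_zero' hr)
    (HasSubst.of_constantCoeff_zero' hh), hrh, X_subst]

theorem coeff_pdivX (f : K⟦X⟧) (n : ℕ) : coeff n (pdivX f) = coeff (n + 1) f :=
  coeff_mk _ _

theorem constantCoeff_pdivX (f : K⟦X⟧) : constantCoeff (pdivX f) = coeff 1 f := by
  rw [← coeff_zero_eq_constantCoeff_apply, coeff_pdivX]

theorem X_mul_pdivX {f : K⟦X⟧} (hf : constantCoeff f = 0) : X * pdivX f = f := by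
  ext (_ | n)
  · simp [hf]
  · rw [coeff_succ_X_mul, coeff_pdivX]

theorem pdivX_X_mul (w : K⟦X⟧) : pdivX (X * w) = w := by
  ext n
  rw [coeff_pdivX, coeff_succ_X_mul]

theorem pdivX_X : pdivX (X : K⟦X⟧) = 1 := by
  simpa using pdivX_X_mul (1 : K⟦X⟧)

theorem mul_inv_pdivX {f : K⟦X⟧} (hf : constantCoeff f = 0) (hf1 : coeff 1 f ≠ 0) :
    f * (pdivX f)⁻¹ = X := by
  nth_rewrite 1 [← X_mul_pdivX hf]
  rw [mul_assoc, PowerSeries.mul_inv_cancel _ (by rwa [constantCoeff_pdivX]), mul_one]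

theorem pow_pdivX_eq_prod {ℓ : ℕ} {h : K⟦X⟧} {f : Fin ℓ → K⟦X⟧} (hh : constantCoeff h = 0)
    (hf : ∀ i, constantCoeff (f i) = 0) (hhf : h ^ ℓ = ∏ i, f i) :
    pdivX h ^ ℓ = ∏ i, pdivX (f i) := by
  apply mul_left_cancel₀ (pow_ne_zero ℓ (X_ne_zero (R := K)))
  calc X ^ ℓ * pdivX h ^ ℓ = h ^ ℓ := by rw [← mul_pow, X_mul_pdivX hh]
    _ = ∏ i, X * pdivX (f i) := by simp only [X_mul_pdivX (hf _), hhf]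
    _ = X ^ ℓ * ∏ i, pdivX (f i) := by simp [Finset.prod_mul_distrib]

theorem prod_inv_pdivX_mul_eq_X_pow {ℓ : ℕ} {h : K⟦X⟧} {f : Fin ℓ → K⟦X⟧}
    (hh : constantCoeff h = 0) (hf : ∀ i, constantCoeff (f i) = 0)
    (hf₁ : ∀ i, coeff 1 (f i) ≠ 0) (hhf : h ^ ℓ = ∏ i, f i) :
    ∏ i, (pdivX (f i))⁻¹ * h = X ^ ℓ := by
  calc ∏ i, (pdivX (f i))⁻¹ * h = (∏ i, (pdivX (f i))⁻¹) * (X * pdivX h) ^ ℓ := by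
        rw [Finset.prod_mul_distrib, Finset.prod_const, Finset.card_univ, Fintype.card_fin,
          X_mul_pdivX hh]
    _ = X ^ ℓ * ∏ i, (pdivX (f i))⁻¹ * pdivX (f i) := by
        rw [mul_pow, pow_pdivX_eq_prod hh hf hhf, Finset.prod_mul_distrib]
        ring
    _ = X ^ ℓ := by
        rw [Finset.prod_eq_one fun i _ =>
          PowerSeries.inv_mul_cancel _ (by rw [constantCoeff_pdivX]; exact hf₁ i), mul_one]

/-- `K[[t^ℓ]]` is `SupportedMod ℓ 0` and `t·K[[t^ℓ]]` is `SupportedMod ℓ 1`; multiplication adds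
the residues. -/
def SupportedMod (ℓ : ℕ) (r : ZMod ℓ) (f : K⟦X⟧) : Prop :=
  ∀ n : ℕ, (n : ZMod ℓ) ≠ r → coeff n f = 0

theorem inTl_iff_supportedMod {ℓ : ℕ} {g : K⟦X⟧} : InTl ℓ g ↔ SupportedMod ℓ 0 g := by
  simp only [InTl, SupportedMod, ne_eq, ZMod.natCast_eq_zero_iff]

theorem isMultN_iff_supportedMod {ℓ : ℕ} {f : K⟦X⟧} :
    IsMultN ℓ f ↔ constantCoeff f = 0 ∧ SupportedMod ℓ 1 f ∧ coeff 1 f = 1 := by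
  simp only [IsMultN, SupportedMod, ← Nat.cast_one (R := ZMod ℓ), ne_eq,
    ZMod.natCast_eq_natCast_iff']

namespace SupportedMod

variable {ℓ : ℕ} {a b c : ZMod ℓ} {f g : K⟦X⟧}

theorem zero : SupportedMod ℓ a (0 : K⟦X⟧) := fun _ _ => map_zero _

theorem add (hf : SupportedMod ℓ a f) (hg : SupportedMod ℓ a g) : SupportedMod ℓ a (f + g) :=
  fun n hn => by rw [map_add, hf n hn, hg n hn, add_zero]

theorem sub (hf : SupportedMod ℓ a f) (hg : SupportedMod ℓ a g) : SupportedMod ℓ a (f - g) :=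
  fun n hn => by rw [map_sub, hf n hn, hg n hn, sub_zero]

theorem mul (hf : SupportedMod ℓ a f) (hg : SupportedMod ℓ b g) (hc : a + b = c) :
    SupportedMod ℓ c (f * g) := by
  intro n hn
  rw [coeff_mul]
  refine Finset.sum_eq_zero fun x hx => ?_
  rw [Finset.HasAntidiagonal.mem_antidiagonal] at hx
  by_cases hx₁ : (x.1 : ZMod ℓ) = a
  · rw [hg x.2 fun hx₂ => hn (by rw [← hx, Nat.cast_add, hx₁, hx₂, hc]), mul_zero]
  · rw [hf x.1 hx₁, zero_mul]

theorem C (x : K) : SupportedMod ℓ 0 (C x) := by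
  intro n hn
  rw [coeff_C, if_neg]
  rintro rfl
  exact hn Nat.cast_zero

theorem one : SupportedMod ℓ 0 (1 : K⟦X⟧) := by
  simpa using C (ℓ := ℓ) (1 : K)

theorem X : SupportedMod ℓ 1 (X : K⟦X⟧) := by
  intro n hn
  rw [coeff_X, if_neg]
  rintro rfl
  exact hn Nat.cast_one

theorem pow (hf : SupportedMod ℓ a f) (k : ℕ) : SupportedMod ℓ (k * a) (f ^ k) := by
  induction k with
  | zero => simpa using one
  | succ k ih => exact (pow_succ f k).symm ▸ ih.mul hf (by push_cast; ring)

theorem inv (hf : SupportedMod ℓ 0 f) : SupportedMod ℓ 0 f⁻¹ := by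
  intro n
  induction n using Nat.strong_induction_on with
  | _ n ih =>
  intro hn
  have hn₀ : n ≠ 0 := by rintro rfl; exact hn Nat.cast_zero
  rw [coeff_inv, if_neg hn₀, Finset.sum_eq_zero, mul_zero]
  intro x hx
  rw [Finset.HasAntidiagonal.mem_antidiagonal] at hx
  split_ifs with hlt
  · by_cases hx₂ : (x.2 : ZMod ℓ) = 0
    · rw [hf x.1 fun hx₁ => hn (by rw [← hx, Nat.cast_add, hx₁, hx₂, add_zero]), zero_mul]
    · rw [ih x.2 hlt hx₂, mul_zero]
  · rfl

theorem pdivX (hf : SupportedMod ℓ 1 f) : SupportedMod ℓ 0 (pdivX f) := by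
  intro n hn
  rw [coeff_pdivX]
  exact hf (n + 1) fun h => hn (by simpa using h)

theorem subst (hg : SupportedMod ℓ a g) (hf : SupportedMod ℓ 1 f) (hf₀ : constantCoeff f = 0) :
    SupportedMod ℓ a (g.subst f) := by
  intro n hn
  rw [← pcomp_eq_subst hf₀, pcomp, coeff_mk]
  refine Finset.sum_eq_zero fun k _ => ?_
  by_cases hk : (k : ZMod ℓ) = a
  · rw [(hf.pow k) n (by rwa [mul_one, hk]), mul_zero]
  · rw [hg k hk, zero_mul]

end SupportedMod

theorem supportedMod_substInv {ℓ : ℕ} {P : K⟦X⟧} [Invertible (coeff 1 P)]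
    (hP : SupportedMod ℓ 1 P) : SupportedMod ℓ 1 P.substInv := by
  intro n
  induction n using Nat.strong_induction_on with
  | _ n ih =>
  intro hn
  rw [PowerSeries.substInv, coeff_mk]
  match n with
  | 0 => rw [substInvFun]
  | 1 => exact absurd Nat.cast_one hn
  | k + 2 =>
    -- the recursion computes the coefficient from `P` composed with a truncation of `P.substInv`,
    -- which is supported in degrees `≡ 1` by induction
    set B : K⟦X⟧ := ∑ i : Fin (k + 2), C (substInvFun P i) * X ^ (i : ℕ)
    have hB : SupportedMod ℓ 1 B := by
      refine Finset.sum_induction _ (SupportedMod ℓ 1) (fun _ _ => SupportedMod.add)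
        SupportedMod.zero fun i _ => ?_
      by_cases hi : ((i : ℕ) : ZMod ℓ) = 1
      · exact (SupportedMod.C _).mul (SupportedMod.X.pow i) (by rw [hi, mul_one, zero_add])
      · have := ih i (by omega) hi
        rw [substInv, coeff_mk] at this
        rw [this, map_zero, zero_mul]
        exact SupportedMod.zero
    have hB₀ : constantCoeff B = 0 := by
      simp [B, map_sum, zero_pow_eq, substInvFun]
    rw [substInvFun.eq_3 _ _ (by omega), hP.subst hB hB₀ (k + 2) hn, mul_zero]

end PowerSeries

section IsMultN

variable {K : Type*} [Field K] {ℓ : ℕ} {f g : K⟦X⟧}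

theorem isMultN_X : IsMultN ℓ (X : K⟦X⟧) :=
  isMultN_iff_supportedMod.mpr ⟨constantCoeff_X, SupportedMod.X, coeff_one_X⟩

theorem IsMultN.supportedMod_pdivX (hf : IsMultN ℓ f) : SupportedMod ℓ 0 (pdivX f) :=
  (isMultN_iff_supportedMod.mp hf).2.1.pdivX

theorem IsMultN.constantCoeff_pdivX (hf : IsMultN ℓ f) : constantCoeff (pdivX f) = 1 := by
  rw [PowerSeries.constantCoeff_pdivX, hf.2.2]

theorem IsMultN.mul_left {w : K⟦X⟧} (hw : SupportedMod ℓ 0 w) (hw₀ : constantCoeff w = 1)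
    (hf : IsMultN ℓ f) : IsMultN ℓ (w * f) := by
  obtain ⟨hf₀, hf₁, hf₂⟩ := isMultN_iff_supportedMod.mp hf
  refine isMultN_iff_supportedMod.mpr ⟨by simp [hf₀], hw.mul hf₁ (zero_add 1), ?_⟩
  rw [coeff_mul, Finset.Nat.sum_antidiagonal_eq_sum_range_succ_mk]
  simp [Finset.sum_range_succ, hw₀, hf₀, hf₂]

theorem IsMultN.subst (hg : IsMultN ℓ g) (hf : IsMultN ℓ f) : IsMultN ℓ (g.subst f) := by
  obtain ⟨hg₀, hg₁, hg₂⟩ := isMultN_iff_supportedMod.mp hg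
  obtain ⟨hf₀, hf₁, hf₂⟩ := isMultN_iff_supportedMod.mp hf
  exact isMultN_iff_supportedMod.mpr
    ⟨by rw [constantCoeff_subst_of_constantCoeff_eq_zero hf₀, hg₀], hg₁.subst hf₁ hf₀,
      by rw [coeff_one_subst_of_constantCoeff_eq_zero hf₀, hg₂, hf₂, one_mul]⟩

theorem IsMultN.exists_subst_inverse (hf : IsMultN ℓ f) :
    ∃ r : K⟦X⟧, IsMultN ℓ r ∧ r.subst f = X ∧ f.subst r = X := by
  obtain ⟨hf₀, hf₁, hf₂⟩ := isMultN_iff_supportedMod.mp hf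
  let : Invertible (coeff 1 f) := hf₂ ▸ invertibleOne
  refine ⟨f.substInv, isMultN_iff_supportedMod.mpr ⟨constantCoeff_substInv f,
    supportedMod_substInv hf₁, ?_⟩, subst_substInv_left f hf₀, subst_substInv_right f hf₀⟩
  rw [coeff_one_substInv, invOf_eq_inv, hf₂, inv_one]

end IsMultN

section MaR

variable {K : Type*} [Field K] {m : ℕ}

noncomputable def maOne : MaR K m := (1, 1, fun _ => X, X)

theorem isMaRN_maOne : IsMaRN m (maOne : MaR K m) :=
  ⟨inTl_iff_supportedMod.mpr SupportedMod.one, map_one _,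
    inTl_iff_supportedMod.mpr SupportedMod.one, map_one _, fun _ => isMultN_X, isMultN_X,
    by simp [maOne]⟩

theorem pow_root_maMul_eq_prod {p q : MaR K m} (hp : IsMaRN m p) (hq : IsMaRN m q) :
    (maMul p q).2.2.2 ^ (m + 1) = ∏ i, (maMul p q).2.2.1 i := by
  obtain ⟨b, g, f, h⟩ := p
  obtain ⟨c, d, f', h'⟩ := q
  obtain ⟨-, -, -, -, hf, hh, hhf⟩ := hp
  obtain ⟨-, -, -, -, -, -, hhf'⟩ := hq
  simp only [maMul, pcomp_eq_subst hh.1]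
  rw [Finset.prod_mul_distrib, Finset.prod_mul_distrib,
    ← pow_pdivX_eq_prod hh.1 (fun i => (hf i).1) hhf, Finset.prod_const, Finset.card_univ,
    Fintype.card_fin, ← mul_pow, PowerSeries.mul_inv_cancel _ (by simp [hh.constantCoeff_pdivX]),
    one_pow, one_mul, ← subst_prod_of_constantCoeff_eq_zero hh.1, ← hhf',
    subst_pow (HasSubst.of_constantCoeff_zero' hh.1)]

theorem IsMaRN.mul {p q : MaR K m} (hp : IsMaRN m p) (hq : IsMaRN m q) :
    IsMaRN m (maMul p q) := by
  have hroot := pow_root_maMul_eq_prod hp hq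
  obtain ⟨b, g, f, h⟩ := p
  obtain ⟨c, d, f', h'⟩ := q
  obtain ⟨hb, hb₀, hg, hg₀, hf, hh, -⟩ := hp
  obtain ⟨hc, hc₀, hd, hd₀, hf', hh', -⟩ := hq
  rw [inTl_iff_supportedMod] at hb hg hc hd
  have hh₁ := (isMultN_iff_supportedMod.mp hh).2.1
  refine ⟨?_, ?_, ?_, ?_, fun i => ?_, ?_, hroot⟩ <;>
    simp only [maMul, pcomp_eq_subst hh.1, inTl_iff_supportedMod]
  · exact ((SupportedMod.C _).mul hb (zero_add 0)).add
      ((hg.mul (hf _).supportedMod_pdivX.inv (zero_add 0)).mul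
        ((hc.subst hh₁ hh.1).sub (SupportedMod.C _)) (zero_add 0))
  · simp [constantCoeff_subst_of_constantCoeff_eq_zero hh.1, hb₀, hc₀]
  · exact hg.mul (hd.subst hh₁ hh.1) (zero_add 0)
  · simp [constantCoeff_subst_of_constantCoeff_eq_zero hh.1, hg₀, hd₀]
  · exact .mul_left ((hf i).supportedMod_pdivX.mul hh.supportedMod_pdivX.inv (zero_add 0))
      (by simp [(hf i).constantCoeff_pdivX, hh.constantCoeff_pdivX]) ((hf' i).subst hh)
  · exact hh'.subst hh

theorem maMul_apply_eq_X {p q : MaR K m} (hp : IsMaRN m p) {j : Fin (m + 1)}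
    (hpj : p.2.2.1 j = X) (hqj : q.2.2.1 j = X) : (maMul p q).2.2.1 j = X := by
  obtain ⟨-, -, -, -, -, hh, -⟩ := hp
  simp only [maMul, hpj, hqj, pdivX_X, one_mul, pcomp_eq_subst hh.1,
    subst_X (HasSubst.of_constantCoeff_zero' hh.1)]
  rw [mul_comm, mul_inv_pdivX hh.1 (by simp [hh.2.2])]

/-- Solves `maMul p q = maOne` for `q`, when `r` is the compositional inverse of the root of `p`. -/
noncomputable def maInv (p : MaR K m) (r : K⟦X⟧) : MaR K m :=
  ((1 + p.2.1⁻¹ * pdivX (p.2.2.1 (Fin.last m)) * (1 - p.1)).subst r, p.2.1⁻¹.subst r,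
    fun i => ((pdivX (p.2.2.1 i))⁻¹ * p.2.2.2).subst r, r)

theorem pow_root_maInv_eq_prod {p : MaR K m} (hp : IsMaRN m p) {r : K⟦X⟧}
    (hr : constantCoeff r = 0) : (maInv p r).2.2.2 ^ (m + 1) = ∏ i, (maInv p r).2.2.1 i := by
  obtain ⟨-, -, -, -, hf, hh, hhf⟩ := hp
  have hs := HasSubst.of_constantCoeff_zero' hr
  simp only [maInv]
  rw [← subst_prod_of_constantCoeff_eq_zero hr,
    prod_inv_pdivX_mul_eq_X_pow hh.1 (fun i => (hf i).1) (fun i => by simp [(hf i).2.2]) hhf,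
    subst_pow hs, subst_X hs]

theorem IsMaRN.inv {p : MaR K m} (hp : IsMaRN m p) {r : K⟦X⟧} (hr : IsMultN (m + 1) r) :
    IsMaRN m (maInv p r) := by
  have hroot := pow_root_maInv_eq_prod hp hr.1
  obtain ⟨b, g, f, h⟩ := p
  obtain ⟨hb, hb₀, hg, hg₀, hf, hh, -⟩ := hp
  rw [inTl_iff_supportedMod] at hb hg
  have hr₁ := (isMultN_iff_supportedMod.mp hr).2.1
  refine ⟨?_, ?_, ?_, ?_, fun i => ?_, hr, hroot⟩ <;>
    simp only [maInv, inTl_iff_supportedMod]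
  · exact (SupportedMod.one.add ((hg.inv.mul (hf _).supportedMod_pdivX (zero_add 0)).mul
      (SupportedMod.one.sub hb) (zero_add 0))).subst hr₁ hr.1
  · simp [constantCoeff_subst_of_constantCoeff_eq_zero hr.1, hb₀]
  · exact hg.inv.subst hr₁ hr.1
  · simp [constantCoeff_subst_of_constantCoeff_eq_zero hr.1, hg₀]
  · exact (IsMultN.mul_left (hf i).supportedMod_pdivX.inv
      (by simp [(hf i).constantCoeff_pdivX]) hh).subst hr

theorem maInv_apply_eq_X {p : MaR K m} {r : K⟦X⟧} (hhr : p.2.2.2.subst r = X)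
    {j : Fin (m + 1)} (hpj : p.2.2.1 j = X) : (maInv p r).2.2.1 j = X := by
  simp only [maInv, hpj, pdivX_X, inv_one, one_mul, hhr]

theorem maMul_maInv {p : MaR K m} (hp : IsMaRN m p) {r : K⟦X⟧} (hr : constantCoeff r = 0)
    (hrh : r.subst p.2.2.2 = X) : maMul p (maInv p r) = maOne := by
  obtain ⟨b, g, f, h⟩ := p
  obtain ⟨-, hb₀, -, hg₀, hf, hh, -⟩ := hp
  dsimp only at hb₀ hg₀ hf hh hrh
  have hA₀ : constantCoeff (1 + g⁻¹ * pdivX (f (Fin.last m)) * (1 - b)) = 1 := by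
    simp [hb₀, hg₀, (hf _).constantCoeff_pdivX]
  have hg : g * g⁻¹ = 1 := PowerSeries.mul_inv_cancel _ (by simp [hg₀])
  have hw : ∀ i, pdivX (f i) * (pdivX (f i))⁻¹ = 1 := fun i =>
    PowerSeries.mul_inv_cancel _ (by simp [(hf i).constantCoeff_pdivX])
  have hX : h * (pdivX h)⁻¹ = X := mul_inv_pdivX hh.1 (by simp [hh.2.2])
  simp only [maMul, maInv, maOne, Prod.mk.injEq, pcomp_eq_subst hh.1,
    subst_subst_of_subst_eq_X hr hh.1 hrh, constantCoeff_subst_of_constantCoeff_eq_zero hr, hA₀,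
    map_one, one_mul, add_sub_cancel_left]
  refine ⟨?_, hg, funext fun i => ?_, hrh⟩
  · linear_combination (1 - b) * (pdivX (f (Fin.last m)) * (pdivX (f (Fin.last m)))⁻¹) * hg
      + (1 - b) * hw (Fin.last m)
  · linear_combination (h * (pdivX h)⁻¹) * hw i + hX

theorem maInv_maMul {p : MaR K m} (hp : IsMaRN m p) {r : K⟦X⟧} (hr : IsMultN (m + 1) r)
    (hhr : p.2.2.2.subst r = X) : maMul (maInv p r) p = maOne := by
  obtain ⟨b, g, f, h⟩ := p
  obtain ⟨-, hb₀, -, hg₀, hf, -, -⟩ := hp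
  dsimp only at hb₀ hg₀ hf hhr
  have hs := HasSubst.of_constantCoeff_zero' hr.1
  have hw : ∀ i, (pdivX (f i))⁻¹ * pdivX (f i) = 1 := fun i =>
    PowerSeries.inv_mul_cancel _ (by simp [(hf i).constantCoeff_pdivX])
  have hpdivX : ∀ i, pdivX (((pdivX (f i))⁻¹ * h).subst r) = (pdivX (f i))⁻¹.subst r := by
    intro i
    rw [subst_mul hs, hhr, mul_comm, pdivX_X_mul]
  have hinv : ∀ i, ((pdivX (f i))⁻¹.subst r)⁻¹ = (pdivX (f i)).subst r := by
    intro i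
    rw [PowerSeries.inv_eq_iff_mul_eq_one (by
        simp [constantCoeff_subst_of_constantCoeff_eq_zero hr.1, (hf i).constantCoeff_pdivX]),
      ← subst_mul hs, mul_comm, hw, subst_one_of_constantCoeff_eq_zero hr.1]
  simp only [maMul, maInv, maOne, Prod.mk.injEq, pcomp_eq_subst hr.1, hb₀, map_one, one_mul,
    hpdivX, hinv]
  refine ⟨?_, ?_, funext fun i => ?_, hhr⟩
  · have hA : 1 + g⁻¹ * pdivX (f (Fin.last m)) * (1 - b) + g⁻¹ * pdivX (f (Fin.last m)) * (b - 1)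
        = 1 := by ring
    simpa only [subst_add hs, subst_mul hs, subst_sub hs, subst_one_of_constantCoeff_eq_zero hr.1]
      using congrArg (subst r) hA
  · rw [← subst_mul hs, PowerSeries.inv_mul_cancel _ (by simp [hg₀]),
      subst_one_of_constantCoeff_eq_zero hr.1]
  · have hu : ((pdivX (f i))⁻¹).subst r * (pdivX (f i)).subst r = 1 := by
      rw [← subst_mul hs, hw, subst_one_of_constantCoeff_eq_zero hr.1]
    have hfr : (f i).subst r = r * (pdivX (f i)).subst r := by
      conv_lhs => rw [← X_mul_pdivX (hf i).1]
      rw [subst_mul hs, subst_X hs]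
    rw [hfr]
    linear_combination (r * (pdivX r)⁻¹) * hu + mul_inv_pdivX hr.1 (by simp [hr.2.2])

end MaR

theorem multiple_almost_riordan_Lhat_subgroup_general {K : Type*} [Field K]
    (m : ℕ) (j : Fin (m + 1)) :
    (∀ p q : MaR K m, (IsMaRN m p ∧ p.2.2.1 j = X) → (IsMaRN m q ∧ q.2.2.1 j = X) →
      (IsMaRN m (maMul p q) ∧ (maMul p q).2.2.1 j = X)) ∧
    (IsMaRN m ((1, 1, fun _ => X, X) : MaR K m) ∧
      ((1, 1, fun _ => X, X) : MaR K m).2.2.1 j = X) ∧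
    (∀ p : MaR K m, (IsMaRN m p ∧ p.2.2.1 j = X) →
      ∃ q : MaR K m, (IsMaRN m q ∧ q.2.2.1 j = X) ∧
        maMul p q = (1, 1, fun _ => X, X) ∧ maMul q p = (1, 1, fun _ => X, X)) := by
  refine ⟨fun p q ⟨hp, hpj⟩ ⟨hq, hqj⟩ => ⟨hp.mul hq, maMul_apply_eq_X hp hpj hqj⟩,
    ⟨isMaRN_maOne, rfl⟩, ?_⟩
  rintro p ⟨hp, hpj⟩
  have hh : IsMultN (m + 1) p.2.2.2 := hp.2.2.2.2.2.1
  obtain ⟨r, hr, hrh, hhr⟩ := hh.exists_subst_inverse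
  exact ⟨maInv p r, ⟨hp.inv hr, maInv_apply_eq_X hhr hpj⟩, maMul_maInv hp hr.1 hrh,
    maInv_maMul hp hr hhr⟩

/-- For each `j`, the set `L̂_j = {(b | g; f₁, …, f_ℓ) : f_j = t}` is a
subgroup of the multiple almost-Riordan group. -/
theorem multiple_almost_riordan_Lhat_subgroup {K : Type*} [Field K] [CharZero K]
    (m : ℕ) (j : Fin (m + 1)) :
    (∀ p q : MaR K m, (IsMaRN m p ∧ p.2.2.1 j = X) → (IsMaRN m q ∧ q.2.2.1 j = X) →
      (IsMaRN m (maMul p q) ∧ (maMul p q).2.2.1 j = X)) ∧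
    (IsMaRN m ((1, 1, fun _ => X, X) : MaR K m) ∧
      ((1, 1, fun _ => X, X) : MaR K m).2.2.1 j = X) ∧
    (∀ p : MaR K m, (IsMaRN m p ∧ p.2.2.1 j = X) →
      ∃ q : MaR K m, (IsMaRN m q ∧ q.2.2.1 j = X) ∧
        maMul p q = (1, 1, fun _ => X, X) ∧ maMul q p = (1, 1, fun _ => X, X)) :=
  multiple_almost_riordan_Lhat_subgroup_general m j
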